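/- Let γ_1,…,γ_M ≥ 0 with Γ = ∑_k γ_k > 0, and set p_k = γ_k/Γ. Let L_1,…,L_M be elements of a Banach algebra with ‖L_k‖ ≤ Ω for all k, and L = ∑_k γ_k L_k. For t ≥ 0, N ∈ ℕ with N ≥ 1, and ω = tΓ/N, we have ‖exp((t/N)L) − ∑_{k=1}^M p_k exp(ω L_k)‖ ≤ (tΓΩ/N)² · exp(tΓΩ/N). -/

import Mathlib

/-!
Since the weights `γ k / Γ` sum to one and `ω * (γ k / Γ) = (t / N) * γ k`, the Taylor terms of
order zero and one of `exp ((t / N) • L)` and of the convex combination `∑ p_k • exp (ω • L_k)`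
coincide. What is left is a difference of second-order remainders `exp x - 1 - x`, and every
argument `x` involved has norm at most `s = tΓΩ/N`, so each remainder is at most `s² / 2 · exp s`.
-/

open NormedSpace Nat

theorem two_mul_factorial_le_factorial_add_two (n : ℕ) : 2 * n ! ≤ (n + 2)! := by
  simpa [mul_comm] using
    Nat.le_of_dvd (factorial_pos _) (factorial_mul_factorial_dvd_factorial_add n 2)

theorem norm_exp_sub_one_sub_le {𝔸 : Type*} [NormedRing 𝔸] [NormedAlgebra ℝ 𝔸] [CompleteSpace 𝔸]
    {x : 𝔸} {r : ℝ} (hx : ‖x‖ ≤ r) : ‖exp x - 1 - x‖ ≤ r ^ 2 / 2 * Real.exp r := by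
  have hr : 0 ≤ r := (norm_nonneg x).trans hx
  have htail : HasSum (fun n : ℕ => ((n + 2)! : ℝ)⁻¹ • x ^ (n + 2)) (exp x - 1 - x) := by
    simpa [Finset.sum_range_succ, sub_sub] using
      (hasSum_nat_add_iff' 2).mpr (exp_series_hasSum_exp' (𝕂 := ℝ) x)
  have hmajorant : HasSum (fun n : ℕ => r ^ 2 / 2 * (r ^ n / n !)) (r ^ 2 / 2 * Real.exp r) := by
    rw [Real.exp_eq_exp_ℝ]
    exact (expSeries_div_hasSum_exp r).mul_left _
  refine htail.norm_le_of_bounded hmajorant fun n => ?_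
  have hfact : (2 * n ! : ℝ) ≤ (n + 2)! := by exact_mod_cast two_mul_factorial_le_factorial_add_two n
  calc ‖((n + 2)! : ℝ)⁻¹ • x ^ (n + 2)‖ ≤ ((n + 2)! : ℝ)⁻¹ * r ^ (n + 2) := by
        rw [norm_smul, norm_inv, RCLike.norm_natCast]
        gcongr
        exact (norm_pow_le' x (by omega)).trans (pow_le_pow_left₀ (norm_nonneg x) hx _)
    _ ≤ (2 * n ! : ℝ)⁻¹ * r ^ (n + 2) := by gcongr
    _ = r ^ 2 / 2 * (r ^ n / n !) := by rw [pow_add]; ring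

theorem norm_exp_sum_smul_sub_sum_smul_exp_le {𝔸 : Type*} [NormedRing 𝔸] [NormedAlgebra ℝ 𝔸]
    [CompleteSpace 𝔸] {ι : Type*} (s : Finset ι) {p : ι → ℝ} (hp : ∀ i ∈ s, 0 ≤ p i)
    (hp₁ : ∑ i ∈ s, p i = 1) {x : ι → 𝔸} {r : ℝ} (hx : ∀ i ∈ s, ‖x i‖ ≤ r) :
    ‖exp (∑ i ∈ s, p i • x i) - ∑ i ∈ s, p i • exp (x i)‖ ≤ r ^ 2 * Real.exp r := by
  set y := ∑ i ∈ s, p i • x i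
  have hy : ‖y‖ ≤ r := by
    simpa using (convex_closedBall (0 : 𝔸) r).sum_mem hp hp₁ fun i hi => by simpa using hx i hi
  have hsplit : exp y - ∑ i ∈ s, p i • exp (x i)
      = (exp y - 1 - y) - ∑ i ∈ s, p i • (exp (x i) - 1 - x i) := by
    simp only [smul_sub, Finset.sum_sub_distrib, ← Finset.sum_smul, hp₁, one_smul, y]
    abel
  have hremainders : ‖∑ i ∈ s, p i • (exp (x i) - 1 - x i)‖ ≤ r ^ 2 / 2 * Real.exp r :=
    calc ‖∑ i ∈ s, p i • (exp (x i) - 1 - x i)‖ ≤ ∑ i ∈ s, p i * (r ^ 2 / 2 * Real.exp r) := by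
          refine (norm_sum_le _ _).trans (Finset.sum_le_sum fun i hi => ?_)
          rw [norm_smul, Real.norm_of_nonneg (hp i hi)]
          exact mul_le_mul_of_nonneg_left (norm_exp_sub_one_sub_le (hx i hi)) (hp i hi)
      _ = r ^ 2 / 2 * Real.exp r := by rw [← Finset.sum_mul, hp₁, one_mul]
  calc ‖exp y - ∑ i ∈ s, p i • exp (x i)‖
      ≤ ‖exp y - 1 - y‖ + ‖∑ i ∈ s, p i • (exp (x i) - 1 - x i)‖ := hsplit ▸ norm_sub_le _ _
    _ ≤ r ^ 2 / 2 * Real.exp r + r ^ 2 / 2 * Real.exp r :=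
        add_le_add (norm_exp_sub_one_sub_le hy) hremainders
    _ = r ^ 2 * Real.exp r := by ring

theorem qdrift_step_bound_general
    {A : Type*} [NormedRing A] [NormedAlgebra ℝ A] [CompleteSpace A]
    (M : ℕ) (γ : Fin M → ℝ) (hγ : ∀ k, 0 ≤ γ k)
    (Γ : ℝ) (hΓ : Γ = ∑ k, γ k) (hΓpos : 0 < Γ)
    (L : Fin M → A) (Ω : ℝ) (hL : ∀ k, ‖L k‖ ≤ Ω)
    (t : ℝ) (ht : 0 ≤ t) (N : ℕ)
    (ω : ℝ) (hω : ω = t * Γ / N) :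
    ‖NormedSpace.exp ((t / N) • ∑ k, γ k • L k)
        - ∑ k, (γ k / Γ) • NormedSpace.exp (ω • L k)‖
      ≤ (t * Γ * Ω / N) ^ 2 * Real.exp (t * Γ * Ω / N) := by
  have hω₀ : 0 ≤ ω := hω ▸ by positivity
  have hmean : ∑ k, (γ k / Γ) • ω • L k = (t / N) • ∑ k, γ k • L k := by
    simp only [Finset.smul_sum, smul_smul, hω]
    congr! 2
    field_simp
  have hstep : ∀ k, ‖ω • L k‖ ≤ t * Γ * Ω / N := fun k =>
    calc ‖ω • L k‖ = ω * ‖L k‖ := by rw [norm_smul, Real.norm_of_nonneg hω₀]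
      _ ≤ ω * Ω := by gcongr; exact hL k
      _ = t * Γ * Ω / N := by rw [hω]; ring
  rw [← hmean]
  refine norm_exp_sum_smul_sub_sum_smul_exp_le Finset.univ (fun k _ => ?_) ?_ fun k _ => hstep k
  · exact div_nonneg (hγ k) hΓpos.le
  · rw [← Finset.sum_div, ← hΓ, div_self hΓpos.ne']

theorem qdrift_step_bound
    {A : Type*} [NormedRing A] [NormedAlgebra ℝ A] [CompleteSpace A]
    (M : ℕ) (γ : Fin M → ℝ) (hγ : ∀ k, 0 ≤ γ k)
    (Γ : ℝ) (hΓ : Γ = ∑ k, γ k) (hΓpos : 0 < Γ)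
    (L : Fin M → A) (Ω : ℝ) (hL : ∀ k, ‖L k‖ ≤ Ω)
    (t : ℝ) (ht : 0 ≤ t) (N : ℕ) (hN : 1 ≤ N)
    (ω : ℝ) (hω : ω = t * Γ / N) :
    ‖NormedSpace.exp ((t / N) • ∑ k, γ k • L k)
        - ∑ k, (γ k / Γ) • NormedSpace.exp (ω • L k)‖
      ≤ (t * Γ * Ω / N) ^ 2 * Real.exp (t * Γ * Ω / N) :=
  qdrift_step_bound_general M γ hγ Γ hΓ hΓpos L Ω hL t ht N ω hω
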